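/- Let a_n = (2·n!·∏_{j=1}^n ((p+1)^j + 1))^{−1} and b_n = (n!·∏_{j=1}^n (p^j − 1))^{−1}, and set S_p(x) = Σ_{n≥0} a_n x^n and T_p(x) = Σ_{n≥0} b_n x^n. Then for all nonnegative integers d one has S_p(d) ≤ r_p(d,d) ≤ T_p(d). -/

import Mathlib

/-- `r_p(M,d)`: the number of finitely supported nonincreasing sequences `m` of nonnegative
integers with `m 0 ≤ d` and `Σ m_i p^i = M`. -/
noncomputable def rp (p : ℤ) (M d : ℤ) : ℕ :=
  {m : ℕ →₀ ℤ | (∀ i, 0 ≤ m i) ∧ (∀ i, m (i + 1) ≤ m i) ∧ m 0 ≤ d ∧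
    (m.sum fun i a => a * p ^ i) = M}.ncard

/-- `a_n = (2·n!·∏_{j=1}^n ((p+1)^j + 1))⁻¹`. -/
noncomputable def aCoef (p : ℕ) (n : ℕ) : ℝ :=
  1 / (2 * n.factorial * ∏ j ∈ Finset.Icc 1 n, (((p : ℝ) + 1) ^ j + 1))

/-- `b_n = (n!·∏_{j=1}^n (p^j − 1))⁻¹`. -/
noncomputable def bCoef (p : ℕ) (n : ℕ) : ℝ :=
  1 / (n.factorial * ∏ j ∈ Finset.Icc 1 n, ((p : ℝ) ^ j - 1))

/-- `S_p(x) = Σ a_n x^n`. -/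
noncomputable def Sp (p : ℕ) (x : ℝ) : ℝ := ∑' n : ℕ, aCoef p n * x ^ n

/-- `T_p(x) = Σ b_n x^n`. -/
noncomputable def Tp (p : ℕ) (x : ℝ) : ℝ := ∑' n : ℕ, bCoef p n * x ^ n

/-!
Splitting off the first entry, `m ↦ (m₀, (m₁, m₂, …))`, sends a sequence counted by `r_p(d,d)`
to one counted by `r_p(N,N)` with `d = m₀ + pN`; this gives
`Σ_{N ≤ d/(p+1)} r_p(N,N) ≤ r_p(d,d) ≤ Σ_{N ≤ d/p} r_p(N,N)`.
The recurrences `aₙ/(n+1) = aₙ₊₁((p+1)ⁿ⁺¹+1)` and `bₙ/(n+1) = bₙ₊₁(pⁿ⁺¹-1)` give the functional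
equations `S((p+1)x) + S(x) - 1 = ∫₀ˣ S` and `T(px) - T(x) = ∫₀ˣ T`. Comparing these integrals of
increasing functions with Riemann sums shows that `S` and `T` satisfy the two recursive
inequalities in the opposite directions, and strong induction on `d` concludes.
-/

open Finset

section Sequences

noncomputable def baseValue (p : ℕ) (m : ℕ →₀ ℤ) : ℤ := m.sum fun i a => a * (p : ℤ) ^ i

noncomputable def seqTail (m : ℕ →₀ ℤ) : ℕ →₀ ℤ :=
  m.comapDomain Nat.succ Nat.succ_injective.injOn

noncomputable def seqCons (a : ℤ) (m : ℕ →₀ ℤ) : ℕ →₀ ℤ :=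
  Finsupp.single 0 a + m.embDomain (addRightEmbedding 1)

@[simp] lemma seqTail_apply (m : ℕ →₀ ℤ) (i : ℕ) : seqTail m i = m (i + 1) := rfl

@[simp] lemma seqCons_apply_zero (a : ℤ) (m : ℕ →₀ ℤ) : seqCons a m 0 = a := by
  simp [seqCons, Finsupp.embDomain_apply]

@[simp] lemma seqCons_apply_succ (a : ℤ) (m : ℕ →₀ ℤ) (i : ℕ) : seqCons a m (i + 1) = m i := by
  simpa [seqCons] using Finsupp.embDomain_apply_self (addRightEmbedding 1) m i

@[simp] lemma seqTail_seqCons (a : ℤ) (m : ℕ →₀ ℤ) : seqTail (seqCons a m) = m := by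
  ext i; simp

lemma seqCons_head_seqTail (m : ℕ →₀ ℤ) : seqCons (m 0) (seqTail m) = m := by
  ext (_ | i) <;> simp

lemma baseValue_seqCons (p : ℕ) (a : ℤ) (m : ℕ →₀ ℤ) :
    baseValue p (seqCons a m) = a + p * baseValue p m := by
  rw [baseValue, seqCons, Finsupp.sum_add_index' (by simp) (by intros; ring),
    Finsupp.sum_single_index (by simp), Finsupp.sum_embDomain, baseValue, Finsupp.mul_sum]
  simp [pow_succ, mul_comm, mul_left_comm]

lemma baseValue_eq_head_add (p : ℕ) (m : ℕ →₀ ℤ) :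
    baseValue p m = m 0 + p * baseValue p (seqTail m) := by
  conv_lhs => rw [← seqCons_head_seqTail m]
  exact baseValue_seqCons p _ _

lemma apply_mul_pow_le_baseValue (p : ℕ) {m : ℕ →₀ ℤ} (hm : ∀ i, 0 ≤ m i) (i : ℕ) :
    m i * (p : ℤ) ^ i ≤ baseValue p m := by
  have hterm : ∀ j ∈ m.support, 0 ≤ m j * (p : ℤ) ^ j := fun j _ => by
    have := hm j; positivity
  by_cases hi : i ∈ m.support
  · exact single_le_sum hterm hi
  · rw [Finsupp.notMem_support_iff.1 hi, zero_mul]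
    exact sum_nonneg hterm

end Sequences

section Counting

variable {p : ℕ}

def rpSet (p M d : ℕ) : Set (ℕ →₀ ℤ) :=
  {m | (∀ i, 0 ≤ m i) ∧ (∀ i, m (i + 1) ≤ m i) ∧ m 0 ≤ d ∧ baseValue p m = M}

lemma rp_eq_ncard_rpSet (p M d : ℕ) : rp p M d = (rpSet p M d).ncard := rfl

lemma rpSet_finite (hp : 1 < p) (M d : ℕ) : (rpSet p M d).Finite := by
  have hbound : ∀ m ∈ rpSet p M d, ∀ i, m i ∈ Set.Icc (0 : ℤ) M ∧ (M ≤ i → m i = 0) := by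
    rintro m ⟨hnonneg, -, -, hval⟩ i
    have hle := hval ▸ apply_mul_pow_le_baseValue p hnonneg i
    have hpow : (i : ℤ) < (p : ℤ) ^ i := by exact_mod_cast Nat.lt_pow_self hp
    refine ⟨⟨hnonneg i, ?_⟩, fun hMi => ?_⟩
    · nlinarith [hnonneg i]
    · nlinarith [hnonneg i, (Nat.cast_le (α := ℤ)).2 hMi]
  refine Set.Finite.of_finite_image (f := fun m (i : Fin M) => m i) ?_ fun m hm m' hm' h => ?_
  · refine (Set.Finite.pi fun _ => Set.finite_Icc (0 : ℤ) M).subset ?_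
    rintro _ ⟨m, hm, rfl⟩ i -
    exact (hbound m hm i).1
  · ext i
    by_cases hi : i < M
    · exact congrFun h ⟨i, hi⟩
    · rw [(hbound m hm i).2 (by omega), (hbound m' hm' i).2 (by omega)]

lemma rpSet_zero_zero (p : ℕ) : rpSet p 0 0 = {0} := by
  refine Set.eq_singleton_iff_unique_mem.2 ⟨by simp [rpSet, baseValue], ?_⟩
  rintro m ⟨hnonneg, hanti, hhead, -⟩
  ext i
  exact le_antisymm ((antitone_nat_of_succ_le hanti (Nat.zero_le i)).trans hhead) (hnonneg i)

lemma sum_ncard_rpSet_le (hp : 1 < p) {K d : ℕ} (hK : (p + 1) * K ≤ d) :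
    ∑ N ∈ range (K + 1), (rpSet p N N).ncard ≤ (rpSet p d d).ncard := by
  have hdisj : (↑(range (K + 1)) : Set ℕ).PairwiseDisjoint fun N => rpSet p N N :=
    fun N _ N' _ hNN' => Set.disjoint_left.2 fun m hm hm' => hNN' (by
      exact_mod_cast hm.2.2.2.symm.trans hm'.2.2.2)
  rw [← finsum_mem_coe_finset, ← (finite_toSet _).ncard_biUnion (fun N _ => rpSet_finite hp N N)
    hdisj]
  refine Set.ncard_le_ncard_of_injOn (fun m => seqCons (d - p * baseValue p m) m) ?_
    (fun m _ m' _ h => by simpa using congrArg seqTail h) (rpSet_finite hp d d)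
  simp only [Set.mem_iUnion, coe_range, Set.mem_Iio]
  rintro m ⟨N, hN, hnonneg, hanti, hhead, hval⟩
  have hNK : (p + 1) * (N : ℤ) ≤ d := by exact_mod_cast (Nat.mul_le_mul_left _ (by omega)).trans hK
  have hp0 : (0 : ℤ) ≤ p * N := by positivity
  refine ⟨fun i => ?_, fun i => ?_, ?_, ?_⟩
  · cases i with
    | zero => simp only [seqCons_apply_zero, hval]; nlinarith
    | succ i => simpa using hnonneg i
  · cases i with
    | zero => simp only [seqCons_apply_zero, seqCons_apply_succ, hval]; linarith
    | succ i => simpa using hanti i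
  · simp only [seqCons_apply_zero, hval]; linarith
  · rw [baseValue_seqCons, hval]; ring

lemma ncard_rpSet_le_sum (hp : 1 < p) (d : ℕ) :
    (rpSet p d d).ncard ≤ ∑ N ∈ range (d / p + 1), (rpSet p N N).ncard := by
  refine (Set.ncard_le_ncard_of_injOn seqTail ?_ ?_ ((finite_toSet _).biUnion
    fun N _ => rpSet_finite hp N N)).trans ((range (d / p + 1)).set_ncard_biUnion_le _)
  · rintro m ⟨hnonneg, hanti, -, hval⟩
    have htail : ∀ i, 0 ≤ seqTail m i := fun i => hnonneg (i + 1)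
    have hhead := apply_mul_pow_le_baseValue p htail 0
    have hsplit := baseValue_eq_head_add p m
    obtain ⟨N, hN⟩ := Int.eq_ofNat_of_zero_le ((htail 0).trans (by simpa using hhead))
    simp only [Set.mem_iUnion, coe_range, Set.mem_Iio]
    refine ⟨N, ?_, htail, fun i => hanti (i + 1), by simpa [hN] using hhead, hN⟩
    rw [Nat.lt_succ_iff, Nat.le_div_iff_mul_le (by omega)]
    zify
    nlinarith [hnonneg 0]
  · rintro m ⟨-, -, -, hval⟩ m' ⟨-, -, -, hval'⟩ h
    have hhead : m 0 = m' 0 := by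
      have := baseValue_eq_head_add p m
      have := baseValue_eq_head_add p m'
      rw [h] at *
      linarith
    rw [← seqCons_head_seqTail m, ← seqCons_head_seqTail m', hhead, h]

end Counting

section Monomial

variable (n K : ℕ)

lemma pow_succ_div_le_sum_add {y : ℝ} (hK : (K : ℝ) ≤ y) :
    y ^ (n + 1) / (n + 1) ≤ ∑ N ∈ range K, ((N : ℝ) + 1) ^ n + (y - K) * y ^ n := by
  have hmono : MonotoneOn (fun t : ℝ => t ^ n) (Set.Ici 0) :=
    fun a ha b _ hab => pow_le_pow_left₀ ha hab n
  have hint : ∀ a b : ℝ, IntervalIntegrable (fun t : ℝ => t ^ n) MeasureTheory.volume a b :=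
    fun a b => intervalIntegral.intervalIntegrable_pow n
  have hleft : ∫ t in (0 : ℝ)..K, t ^ n ≤ ∑ N ∈ range K, ((N : ℝ) + 1) ^ n := by
    simpa [add_comm] using (hmono.mono fun t ht => ht.1 :
      MonotoneOn (fun t : ℝ => t ^ n) (Set.Icc 0 (0 + K))).integral_le_sum
  have hright : ∫ t in (K : ℝ)..y, t ^ n ≤ (y - K) * y ^ n := by
    calc ∫ t in (K : ℝ)..y, t ^ n ≤ ∫ _ in (K : ℝ)..y, y ^ n :=
          intervalIntegral.integral_mono_on hK (hint _ _) intervalIntegrable_const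
            fun t ht => pow_le_pow_left₀ ((Nat.cast_nonneg K).trans ht.1) ht.2 n
      _ = (y - K) * y ^ n := by simp
  calc y ^ (n + 1) / (n + 1) = ∫ t in (0 : ℝ)..y, t ^ n := by simp [integral_pow]
    _ = (∫ t in (0 : ℝ)..K, t ^ n) + ∫ t in (K : ℝ)..y, t ^ n :=
        (intervalIntegral.integral_add_adjacent_intervals (hint _ _) (hint _ _)).symm
    _ ≤ _ := add_le_add hleft hright

lemma sum_pow_le_pow_succ_div :
    ∑ N ∈ range K, (N : ℝ) ^ n ≤ (K : ℝ) ^ (n + 1) / (n + 1) := by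
  have hmono : MonotoneOn (fun t : ℝ => t ^ n) (Set.Icc 0 (0 + K)) :=
    fun a ha b _ hab => pow_le_pow_left₀ ha.1 hab n
  simpa [integral_pow] using hmono.sum_le_integral

end Monomial

section Series

variable {c : ℕ → ℝ}

noncomputable def evalSeries (c : ℕ → ℝ) (x : ℝ) : ℝ := ∑' n, c n * x ^ n

/-- The termwise primitive `∫₀ˣ Σ cₙ tⁿ dt` of `evalSeries c`. -/
noncomputable def integralSeries (c : ℕ → ℝ) (x : ℝ) : ℝ := ∑' n, c n * (x ^ (n + 1) / (n + 1))

lemma summable_mul_pow_of_le_inv_factorial (hc : ∀ n, 0 ≤ c n)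
    (hle : ∀ n, c n ≤ (n.factorial : ℝ)⁻¹) {x : ℝ} (hx : 0 ≤ x) :
    Summable fun n => c n * x ^ n :=
  (Real.summable_pow_div_factorial x).of_nonneg_of_le (fun n => by have := hc n; positivity)
    fun n => by
      rw [div_eq_inv_mul]
      exact mul_le_mul_of_nonneg_right (hle n) (pow_nonneg hx n)

lemma evalSeries_zero : evalSeries c 0 = c 0 := by
  rw [evalSeries, tsum_eq_single 0 fun n hn => by simp [hn]]
  simp

lemma evalSeries_nonneg (hc : ∀ n, 0 ≤ c n) {x : ℝ} (hx : 0 ≤ x) : 0 ≤ evalSeries c x :=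
  tsum_nonneg fun n => mul_nonneg (hc n) (pow_nonneg hx n)

lemma evalSeries_mono (hc : ∀ n, 0 ≤ c n) (hs : ∀ x, 0 ≤ x → Summable fun n => c n * x ^ n)
    {x y : ℝ} (hx : 0 ≤ x) (hxy : x ≤ y) : evalSeries c x ≤ evalSeries c y :=
  (hs x hx).tsum_le_tsum (fun n => mul_le_mul_of_nonneg_left (pow_le_pow_left₀ hx hxy n) (hc n))
    (hs y (hx.trans hxy))

lemma summable_integralSeries (hc : ∀ n, 0 ≤ c n)
    (hs : ∀ x, 0 ≤ x → Summable fun n => c n * x ^ n) {x : ℝ} (hx : 0 ≤ x) :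
    Summable fun n => c n * (x ^ (n + 1) / (n + 1)) :=
  ((hs x hx).mul_left x).of_nonneg_of_le (fun n => by have := hc n; positivity) fun n => by
    calc c n * (x ^ (n + 1) / (n + 1)) ≤ c n * x ^ (n + 1) :=
          mul_le_mul_of_nonneg_left (div_le_self (by positivity) (by simp)) (hc n)
      _ = x * (c n * x ^ n) := by ring

lemma integralSeries_eq_of_recurrence {q s : ℝ}
    (hrec : ∀ n : ℕ, c n / (n + 1) = c (n + 1) * (q ^ (n + 1) + s)) {x : ℝ}
    (hx : Summable fun n => c n * x ^ n) (hqx : Summable fun n => c n * (q * x) ^ n) :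
    integralSeries c x = evalSeries c (q * x) + s * evalSeries c x - (1 + s) * c 0 := by
  have hshift : ∀ {y : ℝ}, Summable (fun n => c n * y ^ n) →
      HasSum (fun n => c (n + 1) * y ^ (n + 1)) (evalSeries c y - c 0) := fun h => by
    simpa [evalSeries] using (hasSum_nat_add_iff' 1).2 h.hasSum
  have hterm : (fun n : ℕ => c n * (x ^ (n + 1) / (n + 1))) =
      fun n => c (n + 1) * (q * x) ^ (n + 1) + s * (c (n + 1) * x ^ (n + 1)) := by
    ext n
    rw [mul_div_assoc', div_eq_mul_inv, mul_right_comm, ← div_eq_mul_inv, hrec n, mul_pow]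
    ring
  rw [integralSeries, hterm, ((hshift hqx).add ((hshift hx).mul_left s)).tsum_eq]
  ring

lemma integralSeries_le_sum_add (hc : ∀ n, 0 ≤ c n)
    (hs : ∀ x, 0 ≤ x → Summable fun n => c n * x ^ n) {K : ℕ} {y : ℝ} (hK : (K : ℝ) ≤ y) :
    integralSeries c y ≤ ∑ N ∈ range K, evalSeries c (N + 1) + (y - K) * evalSeries c y := by
  have hy : 0 ≤ y := (Nat.cast_nonneg K).trans hK
  refine hasSum_le (fun n => ?_) (summable_integralSeries hc hs hy).hasSum
    ((hasSum_sum fun N _ => (hs _ (by positivity)).hasSum).add ((hs y hy).hasSum.mul_left _))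
  calc c n * (y ^ (n + 1) / (n + 1))
      ≤ c n * (∑ N ∈ range K, ((N : ℝ) + 1) ^ n + (y - K) * y ^ n) :=
        mul_le_mul_of_nonneg_left (pow_succ_div_le_sum_add n K hK) (hc n)
    _ = _ := by rw [mul_add, mul_sum]; ring

lemma sum_le_integralSeries (hc : ∀ n, 0 ≤ c n)
    (hs : ∀ x, 0 ≤ x → Summable fun n => c n * x ^ n) (K : ℕ) :
    ∑ N ∈ range K, evalSeries c N ≤ integralSeries c K := by
  refine hasSum_le (fun n => ?_) (hasSum_sum fun N _ => (hs _ (by positivity)).hasSum)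
    (summable_integralSeries hc hs (by positivity)).hasSum
  rw [← mul_sum]
  exact mul_le_mul_of_nonneg_left (sum_pow_le_pow_succ_div n K) (hc n)

end Series

section Coefficients

variable {p : ℕ}

lemma aCoef_nonneg (p n : ℕ) : 0 ≤ aCoef p n := by
  unfold aCoef; positivity

lemma aCoef_le_inv_factorial (p n : ℕ) : aCoef p n ≤ (n.factorial : ℝ)⁻¹ := by
  rw [aCoef, one_div]
  gcongr
  calc (n.factorial : ℝ) = 1 * n.factorial * 1 := by ring
    _ ≤ 2 * n.factorial * ∏ j ∈ Icc 1 n, (((p : ℝ) + 1) ^ j + 1) := by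
      gcongr
      · norm_num
      · exact Finset.one_le_prod fun _ _ => le_add_of_nonneg_left (by positivity)

lemma aCoef_div_succ (p n : ℕ) :
    aCoef p n / (n + 1) = aCoef p (n + 1) * (((p : ℝ) + 1) ^ (n + 1) + 1) := by
  have : 0 < ∏ j ∈ Icc 1 n, (((p : ℝ) + 1) ^ j + 1) := prod_pos fun j _ => by positivity
  rw [aCoef, aCoef, prod_Icc_succ_top (by omega), Nat.factorial_succ]
  push_cast
  field_simp

lemma one_le_pow_sub_one (hp : 1 < p) {j : ℕ} (hj : 1 ≤ j) : 1 ≤ (p : ℝ) ^ j - 1 := by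
  have : (2 : ℝ) ≤ (p : ℝ) ^ j := by
    exact_mod_cast hp.trans_le (Nat.le_self_pow (by omega) p)
  linarith

lemma one_le_prod_pow_sub_one (hp : 1 < p) (n : ℕ) : 1 ≤ ∏ j ∈ Icc 1 n, ((p : ℝ) ^ j - 1) :=
  Finset.one_le_prod fun _ hj => one_le_pow_sub_one hp (mem_Icc.1 hj).1

lemma bCoef_nonneg (hp : 1 < p) (n : ℕ) : 0 ≤ bCoef p n := by
  have := one_le_prod_pow_sub_one hp n
  unfold bCoef; positivity

lemma bCoef_le_inv_factorial (hp : 1 < p) (n : ℕ) : bCoef p n ≤ (n.factorial : ℝ)⁻¹ := by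
  rw [bCoef, one_div]
  gcongr
  exact le_mul_of_one_le_right (by positivity) (one_le_prod_pow_sub_one hp n)

lemma bCoef_div_succ (hp : 1 < p) (n : ℕ) :
    bCoef p n / (n + 1) = bCoef p (n + 1) * ((p : ℝ) ^ (n + 1) - 1) := by
  have := one_le_prod_pow_sub_one hp n
  have := one_le_pow_sub_one hp (Nat.le_add_left 1 n)
  rw [bCoef, bCoef, prod_Icc_succ_top (by omega), Nat.factorial_succ]
  push_cast
  field_simp

lemma summable_aCoef_mul_pow (p : ℕ) (x : ℝ) (hx : 0 ≤ x) :
    Summable fun n => aCoef p n * x ^ n :=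
  summable_mul_pow_of_le_inv_factorial (aCoef_nonneg p) (aCoef_le_inv_factorial p) hx

lemma summable_bCoef_mul_pow (hp : 1 < p) (x : ℝ) (hx : 0 ≤ x) :
    Summable fun n => bCoef p n * x ^ n :=
  summable_mul_pow_of_le_inv_factorial (bCoef_nonneg hp) (bCoef_le_inv_factorial hp) hx

end Coefficients

section Bounds

lemma Sp_le_one_add_sum (p K : ℕ) {y : ℝ} (hKy : (K : ℝ) ≤ y) (hyK : y ≤ K + 1) :
    Sp p ((p + 1) * y) ≤ 1 + ∑ N ∈ range K, Sp p (N + 1) := by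
  have hy : 0 ≤ y := (Nat.cast_nonneg K).trans hKy
  have hprim := integralSeries_eq_of_recurrence (aCoef_div_succ p)
    (summable_aCoef_mul_pow p y hy) (summable_aCoef_mul_pow p _ (by positivity))
  have hriemann := integralSeries_le_sum_add (aCoef_nonneg p) (summable_aCoef_mul_pow p) hKy
  have hstrip : (y - K) * evalSeries (aCoef p) y ≤ evalSeries (aCoef p) y :=
    mul_le_of_le_one_left (evalSeries_nonneg (aCoef_nonneg p) hy) (by linarith)
  have ha0 : aCoef p 0 = 1 / 2 := by simp [aCoef]
  change evalSeries (aCoef p) _ ≤ 1 + ∑ N ∈ range K, evalSeries (aCoef p) _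
  rw [ha0] at hprim
  linarith

lemma sum_Tp_le_Tp_mul {p : ℕ} (hp : 1 < p) (K : ℕ) :
    ∑ N ∈ range (K + 1), Tp p N ≤ Tp p (p * K) := by
  have hprim := integralSeries_eq_of_recurrence (s := -1)
    (fun n => by rw [bCoef_div_succ hp n, sub_eq_add_neg])
    (summable_bCoef_mul_pow hp K (by positivity)) (summable_bCoef_mul_pow hp _ (by positivity))
  have hriemann := sum_le_integralSeries (bCoef_nonneg hp) (summable_bCoef_mul_pow hp) K
  change ∑ N ∈ range (K + 1), evalSeries (bCoef p) N ≤ evalSeries (bCoef p) _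
  rw [sum_range_succ]
  linarith

lemma Tp_mono {p : ℕ} (hp : 1 < p) {x y : ℝ} (hx : 0 ≤ x) (hxy : x ≤ y) : Tp p x ≤ Tp p y :=
  evalSeries_mono (bCoef_nonneg hp) (summable_bCoef_mul_pow hp) hx hxy

lemma Tp_zero (p : ℕ) : Tp p 0 = 1 := by
  change evalSeries (bCoef p) 0 = 1
  simp [evalSeries_zero, bCoef]

end Bounds

section Induction

variable {p : ℕ}

lemma Sp_le_ncard_rpSet (hp : 1 < p) (d : ℕ) : Sp p d ≤ (rpSet p d d).ncard := by
  induction d using Nat.strong_induction_on with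
  | _ d ih =>
  set K := d / (p + 1)
  have hp1 : (0 : ℝ) < p + 1 := by positivity
  have hSp : Sp p d ≤ 1 + ∑ N ∈ range K, Sp p (N + 1) := by
    have hKd : (K : ℝ) ≤ d / (p + 1) := by
      simpa using Nat.cast_div_le (m := d) (n := p + 1)
    have hdK : (d : ℝ) / (p + 1) ≤ K + 1 := by
      have : (d : ℝ) < (p + 1) * (K + 1) := by
        exact_mod_cast Nat.lt_mul_div_succ d (Nat.succ_pos p)
      rw [div_le_iff₀ hp1]
      linarith
    simpa [mul_div_cancel₀ _ hp1.ne'] using Sp_le_one_add_sum p K hKd hdK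
  have hcount : (1 : ℝ) + ∑ N ∈ range K, ((rpSet p (N + 1) (N + 1)).ncard : ℝ) ≤
      (rpSet p d d).ncard := by
    have := sum_ncard_rpSet_le hp (Nat.mul_div_le d (p + 1))
    rw [sum_range_succ', rpSet_zero_zero, Set.ncard_singleton] at this
    exact_mod_cast this.trans_eq' (add_comm _ _)
  refine hSp.trans (le_trans ?_ hcount)
  gcongr with N hN
  have hK : K * 2 ≤ d := (Nat.mul_le_mul_left K (by omega)).trans (Nat.div_mul_le_self d (p + 1))
  exact_mod_cast ih (N + 1) (by have := mem_range.1 hN; omega)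

lemma ncard_rpSet_le_Tp (hp : 1 < p) (d : ℕ) : ((rpSet p d d).ncard : ℝ) ≤ Tp p d := by
  induction d using Nat.strong_induction_on with
  | _ d ih =>
  rcases Nat.eq_zero_or_pos d with rfl | hd
  · simp [rpSet_zero_zero, Tp_zero]
  calc ((rpSet p d d).ncard : ℝ) ≤ ∑ N ∈ range (d / p + 1), ((rpSet p N N).ncard : ℝ) := by
        exact_mod_cast ncard_rpSet_le_sum hp d
    _ ≤ ∑ N ∈ range (d / p + 1), Tp p N := by
        gcongr with N hN
        exact ih N ((Nat.lt_succ_iff.1 (mem_range.1 hN)).trans_lt (Nat.div_lt_self hd hp))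
    _ ≤ Tp p (p * (d / p : ℕ)) := sum_Tp_le_Tp_mul hp _
    _ ≤ Tp p d := Tp_mono hp (by positivity) (by exact_mod_cast Nat.mul_div_le d p)

end Induction

/-- `S_p(d) ≤ r_p(d,d) ≤ T_p(d)` for all nonnegative integers `d`. -/
theorem stmt_8 (p : ℕ) (hp : p.Prime) (d : ℕ) :
    Sp p (d : ℝ) ≤ (rp p (d : ℤ) (d : ℤ) : ℝ) ∧
    (rp p (d : ℤ) (d : ℤ) : ℝ) ≤ Tp p (d : ℝ) := by
  rw [rp_eq_ncard_rpSet]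
  exact ⟨Sp_le_ncard_rpSet hp.one_lt d, ncard_rpSet_le_Tp hp.one_lt d⟩
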